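/- arXiv:1906.06190 — 2 statements merged into one kernel-verified Lean document; each statement's English description precedes it below -/
import Mathlib

section
/- Let $E \subset F \subset B_1 \subset \mathbb{R}^n$ be measurable sets with $B_1$ the open unit ball. Suppose there is $\varepsilon \in (0,1)$ with $|E| < \varepsilon |B_1|$, and suppose for every $x \in B_1$ and every $r \in (0,1)$ with $|E \cap B_r(x)| \geq \varepsilon |B_r(x)|$ we have $B_r(x) \cap B_1 \subset F$. Then $|E| \leq 10^n \varepsilon |F|$. -/
open MeasureTheory Metric Set Filter
open scoped ENNReal Topology

lemma halfball_aux {V : Type*} [NormedAddCommGroup V] [NormedSpace ℝ V]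
    {x : V} (hx : ‖x‖ < 1) {r : ℝ} (hr0 : 0 < r) (hr1 : r < 1) :
    ∃ y : V, ball y (r/2) ⊆ ball x r ∩ ball 0 1 := by
  rcases le_or_gt ‖x‖ (r/2) with h | h
  · refine ⟨x, fun z hz => ⟨ball_subset_ball (by linarith) hz, ?_⟩⟩
    have hzx : ‖z - x‖ < r/2 := by simpa [dist_eq_norm] using hz
    have hz1 : ‖z‖ ≤ ‖z - x‖ + ‖x‖ := by
      calc ‖z‖ = ‖z - x + x‖ := by rw [sub_add_cancel]
      _ ≤ ‖z - x‖ + ‖x‖ := norm_add_le _ _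
    rw [mem_ball_zero_iff]
    linarith
  · have hx0 : (0:ℝ) < ‖x‖ := lt_of_le_of_lt (by positivity) h
    set t : ℝ := r / (2 * ‖x‖) with ht
    have ht0 : 0 < t := by positivity
    have ht1 : t < 1 := by
      rw [ht, div_lt_one (by positivity)]; linarith
    refine ⟨(1 - t) • x, fun z hz => ?_⟩
    have hyx : ‖(1 - t) • x - x‖ = r / 2 := by
      have : (1 - t) • x - x = (-t) • x := by
        rw [sub_smul, one_smul, neg_smul]; abel
      rw [this, norm_smul, norm_neg, Real.norm_eq_abs, abs_of_pos ht0, ht]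
      field_simp
    have hy : ‖(1 - t) • x‖ = ‖x‖ - r / 2 := by
      rw [norm_smul, Real.norm_eq_abs, abs_of_pos (by linarith)]
      have : t * ‖x‖ = r / 2 := by rw [ht]; field_simp
      nlinarith [this]
    have hzy : ‖z - (1 - t) • x‖ < r / 2 := by simpa [dist_eq_norm] using hz
    constructor
    · rw [mem_ball, dist_eq_norm]
      calc ‖z - x‖ = ‖(z - (1 - t) • x) + ((1 - t) • x - x)‖ := by rw [sub_add_sub_cancel]
      _ ≤ ‖z - (1 - t) • x‖ + ‖(1 - t) • x - x‖ := norm_add_le _ _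
      _ < r := by rw [hyx]; linarith
    · rw [mem_ball_zero_iff]
      calc ‖z‖ = ‖(z - (1 - t) • x) + (1 - t) • x‖ := by rw [sub_add_cancel]
      _ ≤ ‖z - (1 - t) • x‖ + ‖(1 - t) • x‖ := norm_add_le _ _
      _ < 1 := by rw [hy]; linarith

/-- Vitali-covering-type measure comparison lemma. -/
theorem stmt0 {n : ℕ} (E F : Set (EuclideanSpace ℝ (Fin n)))
    (hEm : MeasurableSet E) (hFm : MeasurableSet F)
    (hEF : E ⊆ F) (hF1 : F ⊆ ball 0 1)
    (ε : ℝ) (hε0 : 0 < ε) (hε1 : ε < 1)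
    (hE : volume E < ENNReal.ofReal ε * volume (ball (0 : EuclideanSpace ℝ (Fin n)) 1))
    (hVit : ∀ x ∈ ball (0 : EuclideanSpace ℝ (Fin n)) 1, ∀ r ∈ Set.Ioo (0:ℝ) 1,
      ENNReal.ofReal ε * volume (ball x r) ≤ volume (E ∩ ball x r) →
      ball x r ∩ ball 0 1 ⊆ F) :
    volume E ≤ 10 ^ n * ENNReal.ofReal ε * volume F := by
  set μ : Measure (EuclideanSpace ℝ (Fin n)) := volume with hμ
  set B1 : Set (EuclideanSpace ℝ (Fin n)) := ball 0 1 with hB1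
  -- trivial cases
  rcases Nat.eq_zero_or_pos n with hn | hn
  · -- n = 0 : subsingleton space
    subst hn
    rcases E.eq_empty_or_nonempty with rfl | ⟨x, hx⟩
    · simp
    · exfalso
      have hEu : B1 ⊆ E := fun y _ => (Subsingleton.elim y x) ▸ hx
      have h1 : μ B1 ≤ μ E := measure_mono hEu
      have h2 : ENNReal.ofReal ε * μ B1 ≤ μ B1 :=
        mul_le_of_le_one_left zero_le (by simpa using ENNReal.ofReal_le_one.2 hε1.le)
      exact absurd (hE.trans_le (h2.trans h1)) (lt_irrefl (μ E))
  rcases eq_or_ne (μ E) 0 with hE0 | hE0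
  · calc μ E = 0 := hE0
    _ ≤ _ := zero_le
  haveI : Nontrivial (EuclideanSpace ℝ (Fin n)) := by
    have : 0 < Module.finrank ℝ (EuclideanSpace ℝ (Fin n)) := by
      rw [finrank_euclideanSpace_fin]; exact hn
    exact Module.nontrivial_of_finrank_pos this
  -- basic measure facts
  have hBpos : 0 < μ B1 := measure_ball_pos _ _ one_pos
  have hBne : μ B1 ≠ ⊤ := measure_ball_lt_top.ne
  have hEB : E ⊆ B1 := fun y hy => hF1 (hEF hy)
  have hμEne : μ E ≠ ⊤ := (lt_of_le_of_lt (measure_mono hEB) measure_ball_lt_top).ne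
  have vol_ball : ∀ (x : EuclideanSpace ℝ (Fin n)) (r : ℝ), 0 ≤ r →
      μ (ball x r) = ENNReal.ofReal (r ^ n) * μ B1 := by
    intro x r hr
    rw [hμ, hB1, Measure.addHaar_ball volume x hr, finrank_euclideanSpace_fin]
  -- the threshold radius r₀
  obtain ⟨r₀, hr₀0, hr₀1, hr₀⟩ : ∃ r₀ : ℝ, 0 < r₀ ∧ r₀ < 1 ∧
      ∀ (x : EuclideanSpace ℝ (Fin n)) (r : ℝ), r₀ ≤ r → ¬ (ENNReal.ofReal ε * μ (ball x r) ≤ μ (E ∩ ball x r)) := by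
    have hlt : (μ E).toReal < ε * (μ B1).toReal := by
      have hne : ENNReal.ofReal ε * μ B1 ≠ ⊤ := ENNReal.mul_ne_top ENNReal.ofReal_ne_top hBne
      have h := (ENNReal.toReal_lt_toReal hμEne hne).2 hE
      rwa [ENNReal.toReal_mul, ENNReal.toReal_ofReal hε0.le] at h
    set a := (μ E).toReal with haa
    set tB := (μ B1).toReal with htB
    have ha0 : 0 < a := ENNReal.toReal_pos hE0 hμEne
    have hb0 : 0 < ε * tB := lt_trans ha0 hlt
    set c : ℝ := (a + ε * tB) / (2 * (ε * tB)) with hc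
    have hc0 : 0 < c := by positivity
    have hc1 : c < 1 := by rw [hc, div_lt_one (by positivity)]; linarith
    refine ⟨c ^ ((n : ℝ)⁻¹), Real.rpow_pos_of_pos hc0 _,
      Real.rpow_lt_one hc0.le hc1 (by positivity), ?_⟩
    have hpow : (c ^ ((n : ℝ)⁻¹)) ^ n = c := by
      rw [← Real.rpow_natCast (c ^ ((n:ℝ)⁻¹)) n, ← Real.rpow_mul hc0.le,
        inv_mul_cancel₀ (by exact_mod_cast hn.ne'), Real.rpow_one]
    intro x r hr hcon
    have hr0 : 0 ≤ r := le_trans (Real.rpow_pos_of_pos hc0 _).le hr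
    have hrn : c ≤ r ^ n := hpow ▸ pow_le_pow_left₀ (Real.rpow_pos_of_pos hc0 _).le hr n
    have hkey : ENNReal.ofReal (ε * c) * μ B1 ≤ μ E := by
      calc ENNReal.ofReal (ε * c) * μ B1
          = ENNReal.ofReal ε * (ENNReal.ofReal c * μ B1) := by
            rw [ENNReal.ofReal_mul hε0.le, mul_assoc]
        _ ≤ ENNReal.ofReal ε * μ (ball x r) := by
            rw [vol_ball x r hr0]; gcongr
        _ ≤ μ (E ∩ ball x r) := hcon
        _ ≤ μ E := measure_mono inter_subset_left
    have hfin : (a + ε * tB)/2 ≤ a := by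
      have h1 : ENNReal.ofReal (ε * c) * μ B1 = ENNReal.ofReal ((a + ε*tB)/2) := by
        rw [← ENNReal.ofReal_toReal hBne, ← ENNReal.ofReal_mul (by positivity), ← htB]
        congr 1
        rw [hc]; have htB0 : tB ≠ 0 := fun h => by rw [h, mul_zero] at hb0; exact lt_irrefl _ hb0
        field_simp
      have h2 : μ E = ENNReal.ofReal a := (ENNReal.ofReal_toReal hμEne).symm
      rw [h1, h2] at hkey
      exact (ENNReal.ofReal_le_ofReal_iff ha0.le).1 hkey
    linarith
  -- the family of "good radii"
  set S : EuclideanSpace ℝ (Fin n) → Set ℝ := fun x => {r | 0 < r ∧ ENNReal.ofReal ε * μ (ball x r) ≤ μ (E ∩ ball x r)}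
    with hS
  have hSbdd : ∀ x, ∀ r ∈ S x, r < r₀ := by
    intro x r hr
    by_contra hcon
    exact hr₀ x r (le_of_not_gt hcon) hr.2
  -- closed ball to open ball conversion
  have cb_to_b : ∀ (x : EuclideanSpace ℝ (Fin n)) (r : ℝ),
      ENNReal.ofReal ε * μ (closedBall x r) ≤ μ (E ∩ closedBall x r) →
      ENNReal.ofReal ε * μ (ball x r) ≤ μ (E ∩ ball x r) := by
    intro x r h
    have h2 : μ (E ∩ closedBall x r) ≤ μ (E ∩ ball x r) := by
      calc μ (E ∩ closedBall x r) ≤ μ ((E ∩ ball x r) ∪ sphere x r) := by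
            apply measure_mono
            rintro z ⟨hz1, hz2⟩
            rcases lt_or_eq_of_le (mem_closedBall.1 hz2) with h' | h'
            · exact Or.inl ⟨hz1, h'⟩
            · exact Or.inr h'
        _ ≤ μ (E ∩ ball x r) + μ (sphere x r) := measure_union_le _ _
        _ = μ (E ∩ ball x r) := by rw [Measure.addHaar_sphere, add_zero]
    calc ENNReal.ofReal ε * μ (ball x r)
        ≤ ENNReal.ofReal ε * μ (closedBall x r) := by
          gcongr
          exact ball_subset_closedBall
      _ ≤ μ (E ∩ closedBall x r) := h
      _ ≤ μ (E ∩ ball x r) := h2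
  -- the good set of density points
  set G : Set (EuclideanSpace ℝ (Fin n)) := {x | x ∈ E ∧ Tendsto
      (fun r => μ (E ∩ closedBall x r) / μ (closedBall x r)) (𝓝[>] 0) (𝓝 1)} with hG
  have hGE : G ⊆ E := fun x hx => hx.1
  have hGnull : μ (E \ G) = 0 := by
    have hae : ∀ᵐ x ∂μ, x ∈ E → Tendsto
        (fun r => μ (E ∩ closedBall x r) / μ (closedBall x r)) (𝓝[>] 0) (𝓝 1) := by
      filter_upwards [Besicovitch.ae_tendsto_measure_inter_div_of_measurableSet μ hEm]
        with x hx hxE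
      simpa [Set.indicator_of_mem hxE] using hx
    refine measure_mono_null ?_ (ae_iff.1 hae)
    rintro x ⟨hxE, hxG⟩
    intro hcon
    exact hxG ⟨hxE, hcon hxE⟩
  -- radii at density points
  set rad : EuclideanSpace ℝ (Fin n) → ℝ := fun x => sSup (S x) with hrad
  have hSne : ∀ x ∈ G, (S x).Nonempty := by
    intro x hx
    have h1 : ∀ᶠ r in 𝓝[>] (0:ℝ), ENNReal.ofReal ε <
        μ (E ∩ closedBall x r) / μ (closedBall x r) :=
      hx.2.eventually (eventually_gt_nhds (ENNReal.ofReal_lt_one.2 hε1))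
    obtain ⟨r, hcomp, hrpos⟩ := (h1.and self_mem_nhdsWithin).exists
    have hcb : ENNReal.ofReal ε * μ (closedBall x r) ≤ μ (E ∩ closedBall x r) := by
      have hlt := hcomp.le
      rwa [ENNReal.le_div_iff_mul_le (Or.inl (measure_closedBall_pos μ x hrpos).ne')
        (Or.inl measure_closedBall_lt_top.ne)] at hlt
    exact ⟨r, hrpos, cb_to_b x r hcb⟩
  have hSbddAbove : ∀ x, BddAbove (S x) :=
    fun x => ⟨r₀, fun r hr => (hSbdd x r hr).le⟩
  have hrad_pos : ∀ x ∈ G, 0 < rad x := by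
    intro x hx
    obtain ⟨r, hr⟩ := hSne x hx
    exact lt_of_lt_of_le hr.1 (le_csSup (hSbddAbove x) hr)
  have hrad_le : ∀ x ∈ G, rad x ≤ r₀ := by
    intro x hx
    exact csSup_le (hSne x hx) (fun r hr => (hSbdd x r hr).le)
  have hrad_mem : ∀ x ∈ G,
      ENNReal.ofReal ε * μ (ball x (rad x)) ≤ μ (E ∩ ball x (rad x)) := by
    intro x hx
    have hpos := hrad_pos x hx
    have hbound : ∀ᶠ δ in 𝓝[<] (1:ℝ),
        ENNReal.ofReal (ε * (δ * rad x) ^ n) * μ B1 ≤ μ (E ∩ ball x (rad x)) := by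
      filter_upwards [Ioo_mem_nhdsLT_of_mem (⟨zero_lt_one, le_refl (1:ℝ)⟩ : (1:ℝ) ∈ Ioc 0 1)]
        with δ hδ
      have hs : δ * rad x < rad x := by nlinarith [hδ.1, hδ.2, hpos]
      obtain ⟨r, hrS, hsr⟩ := exists_lt_of_lt_csSup (hSne x hx) hs
      have hrrad : r ≤ rad x := le_csSup (hSbddAbove x) hrS
      have hδ0 : 0 < δ := hδ.1
      calc ENNReal.ofReal (ε * (δ * rad x) ^ n) * μ B1
          ≤ ENNReal.ofReal (ε * r ^ n) * μ B1 := by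
            have hpp : (δ * rad x) ^ n ≤ r ^ n := pow_le_pow_left₀ (by positivity) hsr.le n
            gcongr
        _ = ENNReal.ofReal ε * μ (ball x r) := by
            rw [vol_ball x r (lt_trans (by positivity) hsr).le, ENNReal.ofReal_mul hε0.le,
              mul_assoc]
        _ ≤ μ (E ∩ ball x r) := hrS.2
        _ ≤ μ (E ∩ ball x (rad x)) :=
            measure_mono (inter_subset_inter_right _ (ball_subset_ball hrrad))
    have hcont : Tendsto (fun δ : ℝ => ENNReal.ofReal (ε * (δ * rad x) ^ n) * μ B1)
        (𝓝[<] (1:ℝ)) (𝓝 (ENNReal.ofReal (ε * rad x ^ n) * μ B1)) := by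
      have h1 : Tendsto (fun δ : ℝ => ε * (δ * rad x) ^ n) (𝓝[<] (1:ℝ)) (𝓝 (ε * rad x ^ n)) := by
        have hco : Continuous (fun δ : ℝ => ε * (δ * rad x) ^ n) :=
          continuous_const.mul ((continuous_id.mul continuous_const).pow n)
        have := hco.tendsto 1
        simp only [one_mul] at this
        exact this.mono_left nhdsWithin_le_nhds
      exact ENNReal.Tendsto.mul_const (ENNReal.tendsto_ofReal h1) (Or.inr hBne)
    have hfinal := le_of_tendsto hcont hbound
    rw [vol_ball x (rad x) hpos.le, ← mul_assoc, ← ENNReal.ofReal_mul hε0.le]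
    exact hfinal
  have hrad_big : ∀ x ∈ G,
      μ (E ∩ ball x (5 * rad x)) ≤ ENNReal.ofReal ε * μ (ball x (5 * rad x)) := by
    intro x hx
    have h5 : rad x < 5 * rad x := by nlinarith [hrad_pos x hx]
    have : 5 * rad x ∉ S x := fun hmem => absurd (le_csSup (hSbddAbove x) hmem) (not_le.2 h5)
    have := not_and.mp this (by nlinarith [hrad_pos x hx])
    exact (not_le.mp this).le
  -- Vitali covering
  obtain ⟨u, hu_sub, hu_disj, hu_cov⟩ :=
    Vitali.exists_disjoint_subfamily_covering_enlargement_closedBall G id rad r₀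
      (fun a ha => hrad_le a ha) 4 (by norm_num)
  simp only [id_eq] at hu_disj hu_cov
  have hu_G : ∀ b ∈ u, b ∈ G := fun b hb => hu_sub hb
  have hu_cnt : u.Countable := by
    have hmble : ∀ b : u, MeasurableSet (closedBall (b : EuclideanSpace ℝ (Fin n)) (rad b)) :=
      fun b => measurableSet_closedBall
    have hdisj : Pairwise
        (Function.onFun Disjoint fun b : u => closedBall (b : EuclideanSpace ℝ (Fin n)) (rad b)) := by
      intro b c hbc
      exact hu_disj b.2 c.2 (Subtype.coe_injective.ne hbc)
    have hcnt := MeasureTheory.Measure.countable_meas_pos_of_disjoint_iUnion (μ := μ) hmble hdisj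
    have huniv : {b : u | 0 < μ (closedBall (b : EuclideanSpace ℝ (Fin n)) (rad b))} = univ := by
      ext b
      simp only [mem_setOf_eq, mem_univ, iff_true]
      exact measure_closedBall_pos μ _ (hrad_pos b (hu_G b b.2))
    rw [huniv] at hcnt
    have : Countable u := Set.countable_univ_iff.mp hcnt
    exact Set.countable_coe_iff.mp this
  -- G is covered by 5-times enlarged balls
  have hGcov : G ⊆ ⋃ b ∈ u, ball b (5 * rad b) := by
    intro a ha
    obtain ⟨b, hb, hsub⟩ := hu_cov a ha
    have hab : a ∈ closedBall b (4 * rad b) :=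
      hsub (mem_closedBall_self (hrad_pos a ha).le)
    exact mem_biUnion hb (closedBall_subset_ball (by nlinarith [hrad_pos b (hu_G b hb)]) hab)
  -- the disjoint sets inside F
  set D : EuclideanSpace ℝ (Fin n) → Set (EuclideanSpace ℝ (Fin n)) := fun b => ball b (rad b) ∩ B1 with hD
  have hDF : ∀ b ∈ u, D b ⊆ F := by
    intro b hb
    have hbB1 : b ∈ B1 := hEB (hGE (hu_G b hb))
    exact hVit b hbB1 (rad b) ⟨hrad_pos b (hu_G b hb),
      lt_of_le_of_lt (hrad_le b (hu_G b hb)) hr₀1⟩ (hrad_mem b (hu_G b hb))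
  have hDmeas : ∀ b, MeasurableSet (D b) := fun b =>
    (isOpen_ball.inter isOpen_ball).measurableSet
  have hDdisj : u.PairwiseDisjoint D := by
    intro b hb c hc hbc
    exact Disjoint.mono (inter_subset_left.trans ball_subset_closedBall)
      (inter_subset_left.trans ball_subset_closedBall) (hu_disj hb hc hbc)
  -- lower bound for D b
  have hDlow : ∀ b ∈ u,
      ENNReal.ofReal ((rad b) ^ n) * μ B1 ≤ ENNReal.ofReal (2 ^ n) * μ (D b) := by
    intro b hb
    have hbG := hu_G b hb
    have hbB1 : b ∈ B1 := hEB (hGE hbG)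
    have hpos := hrad_pos b hbG
    have hlt1 : rad b < 1 := lt_of_le_of_lt (hrad_le b hbG) hr₀1
    obtain ⟨y, hy⟩ := halfball_aux (mem_ball_zero_iff.1 hbB1) hpos hlt1
    have h1 : μ (ball y (rad b / 2)) ≤ μ (D b) := measure_mono hy
    rw [vol_ball y _ (by positivity)] at h1
    calc ENNReal.ofReal ((rad b) ^ n) * μ B1
        = ENNReal.ofReal (2 ^ n) * (ENNReal.ofReal ((rad b / 2) ^ n) * μ B1) := by
          rw [← mul_assoc, ← ENNReal.ofReal_mul (by positivity)]
          congr 2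
          rw [div_pow]
          field_simp
      _ ≤ ENNReal.ofReal (2 ^ n) * μ (D b) := by gcongr
  -- main per-ball estimate
  have hmain : ∀ b ∈ u,
      μ (E ∩ ball b (5 * rad b)) ≤ 10 ^ n * ENNReal.ofReal ε * μ (D b) := by
    intro b hb
    have hbG := hu_G b hb
    have hpos := hrad_pos b hbG
    calc μ (E ∩ ball b (5 * rad b)) ≤ ENNReal.ofReal ε * μ (ball b (5 * rad b)) := hrad_big b hbG
      _ = ENNReal.ofReal ε * (ENNReal.ofReal (5 ^ n) * (ENNReal.ofReal ((rad b) ^ n) * μ B1)) := by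
          rw [vol_ball b _ (by positivity), ← mul_assoc (ENNReal.ofReal (5^n)),
            ← ENNReal.ofReal_mul (by positivity)]
          congr 2
          rw [mul_pow]
      _ ≤ ENNReal.ofReal ε * (ENNReal.ofReal (5 ^ n) * (ENNReal.ofReal (2 ^ n) * μ (D b))) :=
          mul_le_mul_right (mul_le_mul_right (hDlow b hb) _) _
      _ = (ENNReal.ofReal (5 ^ n) * ENNReal.ofReal (2 ^ n)) * ENNReal.ofReal ε * μ (D b) := by
          ring
      _ = 10 ^ n * ENNReal.ofReal ε * μ (D b) := by
          congr 2
          rw [← ENNReal.ofReal_mul (by positivity), ← mul_pow]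
          norm_num
  -- put it together
  calc μ E ≤ μ ((E ∩ ⋃ b ∈ u, ball b (5 * rad b)) ∪ (E \ G)) := by
        apply measure_mono
        intro x hx
        by_cases hxG : x ∈ G
        · exact Or.inl ⟨hx, hGcov hxG⟩
        · exact Or.inr ⟨hx, hxG⟩
    _ ≤ μ (E ∩ ⋃ b ∈ u, ball b (5 * rad b)) + μ (E \ G) := measure_union_le _ _
    _ = μ (⋃ b ∈ u, E ∩ ball b (5 * rad b)) := by rw [hGnull, add_zero, inter_iUnion₂]
    _ ≤ ∑' b : u, μ (E ∩ ball (b : EuclideanSpace ℝ (Fin n)) (5 * rad b)) := measure_biUnion_le μ hu_cnt _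
    _ ≤ ∑' b : u, 10 ^ n * ENNReal.ofReal ε * μ (D b) :=
        ENNReal.tsum_le_tsum (fun b => hmain b b.2)
    _ = 10 ^ n * ENNReal.ofReal ε * ∑' b : u, μ (D b) := ENNReal.tsum_mul_left
    _ = 10 ^ n * ENNReal.ofReal ε * μ (⋃ b ∈ u, D b) := by
        rw [measure_biUnion hu_cnt hDdisj (fun b _ => hDmeas b)]
    _ ≤ 10 ^ n * ENNReal.ofReal ε * μ F := by
        gcongr
        exact iUnion₂_subset hDF
end

section
/- Let $n \in \mathbb{N}$, $s \in (0,1)$ with $n > 2s$, and let $0 < r, R < \infty$. For any measurable $u : \mathbb{R}^n \to \mathbb{R}$ with $u \in L^2(B_R)$ and $\nabla^s u \in L^2(B_R)$, there is a constant $C = C(n,s,r,R) > 0$ such that $\int_{\mathbb{R}^n \setminus B_r} \frac{u(y)^2}{|y|^{n+2s}}\,dy \leq C\left(\|\nabla^s u\|_{L^2(B_R)}^2 + \|u\|_{L^2(B_R)}^2\right)$. -/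
open MeasureTheory Metric
open scoped ENNReal

/-- The square of the fractional `s`-gradient, `(∇ˢ u)(x)^2`, as an `ℝ≥0∞`-valued integral. -/
noncomputable def gradSSq (n : ℕ) (s : ℝ) (u : EuclideanSpace ℝ (Fin n) → ℝ)
    (x : EuclideanSpace ℝ (Fin n)) : ℝ≥0∞ :=
  ∫⁻ y, ENNReal.ofReal ((u x - u y) ^ 2 / ‖x - y‖ ^ ((n : ℝ) + 2 * s))

/-- Tail estimate: the nonlocal tail of `u` is controlled by the `L²` norms of `u` and `∇ˢu`
on a ball. -/
theorem stmt4 {n : ℕ} (s : ℝ) (hs : s ∈ Set.Ioo (0:ℝ) 1) (hn : 2 * s < n)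
    (r R : ℝ) (hr : 0 < r) (hR : 0 < R) :
    ∃ C : ℝ, 0 < C ∧
      ∀ u : EuclideanSpace ℝ (Fin n) → ℝ, Measurable u →
        (∫⁻ x in ball (0 : EuclideanSpace ℝ (Fin n)) R, ENNReal.ofReal (u x ^ 2)) < ⊤ →
        (∫⁻ x in ball (0 : EuclideanSpace ℝ (Fin n)) R, gradSSq n s u x) < ⊤ →
        (∫⁻ y in (ball (0 : EuclideanSpace ℝ (Fin n)) r)ᶜ,
            ENNReal.ofReal (u y ^ 2 / ‖y‖ ^ ((n : ℝ) + 2 * s))) ≤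
          ENNReal.ofReal C *
            ((∫⁻ x in ball (0 : EuclideanSpace ℝ (Fin n)) R, gradSSq n s u x) +
              ∫⁻ x in ball (0 : EuclideanSpace ℝ (Fin n)) R, ENNReal.ofReal (u x ^ 2)) := by
  obtain ⟨hs0, hs1⟩ := hs
  set E := EuclideanSpace ℝ (Fin n)
  set t : ℝ := (n : ℝ) + 2 * s with ht
  have htn : (n : ℝ) < t := by simp only [ht]; linarith
  have htpos : (0 : ℝ) < t := by
    have : (0:ℝ) < n := lt_trans (by linarith) hn
    simp only [ht]; linarith
  set ρ : ℝ := min r R with hρdef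
  have hρ : 0 < ρ := lt_min hr hR
  set μρ := volume (ball (0 : E) ρ) with hμρdef
  have hμ0 : μρ ≠ 0 := (measure_ball_pos _ _ hρ).ne'
  have hμtop : μρ ≠ ⊤ := measure_ball_lt_top.ne
  -- the tail kernel integral
  set K : ℝ≥0∞ := ∫⁻ y in (ball (0 : E) r)ᶜ, ENNReal.ofReal (1 / ‖y‖ ^ t) with hKdef
  have hK : K < ⊤ := by
    have hdim : ((Module.finrank ℝ E : ℕ) : ℝ) < t := by
      rw [show Module.finrank ℝ E = n from finrank_euclideanSpace_fin]; exact htn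
    have hfin := finite_integral_one_add_norm (E := E) (μ := volume) hdim
    set c : ℝ := ((1 + r) / r) ^ t with hc
    have hcpos : 0 < c := Real.rpow_pos_of_pos (by positivity) _
    calc K ≤ ∫⁻ y in (ball (0 : E) r)ᶜ, ENNReal.ofReal (c * (1 + ‖y‖) ^ (-t)) := by
            apply setLIntegral_mono' measurableSet_ball.compl
            intro y hy
            rw [Set.mem_compl_iff, mem_ball, dist_zero_right, not_lt] at hy
            have hypos : (0 : ℝ) < ‖y‖ := lt_of_lt_of_le hr hy
            apply ENNReal.ofReal_le_ofReal
            have h1 : 1 + ‖y‖ ≤ (1 + r) / r * ‖y‖ := by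
              rw [div_mul_eq_mul_div, le_div_iff₀ hr]
              nlinarith
            have h2 : (1 + ‖y‖) ^ t ≤ c * ‖y‖ ^ t := by
              rw [hc, ← Real.mul_rpow (by positivity) hypos.le]
              exact Real.rpow_le_rpow (by positivity) h1 htpos.le
            rw [Real.rpow_neg (by positivity), ← div_eq_mul_inv]
            rw [div_le_div_iff₀ (Real.rpow_pos_of_pos hypos _) (Real.rpow_pos_of_pos (by positivity) _)]
            calc 1 * (1 + ‖y‖) ^ t = (1 + ‖y‖) ^ t := one_mul _
              _ ≤ c * ‖y‖ ^ t := h2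
        _ ≤ ∫⁻ y, ENNReal.ofReal (c * (1 + ‖y‖) ^ (-t)) := setLIntegral_le_lintegral _ _
        _ = ENNReal.ofReal c * ∫⁻ y, ENNReal.ofReal ((1 + ‖y‖) ^ (-t)) := by
            simp_rw [ENNReal.ofReal_mul hcpos.le]
            exact lintegral_const_mul' _ _ ENNReal.ofReal_ne_top
        _ < ⊤ := ENNReal.mul_lt_top ENNReal.ofReal_lt_top hfin
  set A : ℝ≥0∞ := ENNReal.ofReal (2 ^ (t + 1)) with hA
  set M : ℝ≥0∞ := A + 2 * K with hM
  have hMtop : M ≠ ⊤ := by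
    rw [hM]
    exact (ENNReal.add_lt_top.2 ⟨ENNReal.ofReal_lt_top,
      ENNReal.mul_lt_top (by norm_num) hK⟩).ne
  have hMdiv : M / μρ ≠ ⊤ := (ENNReal.div_lt_top hMtop hμ0).ne
  refine ⟨(M / μρ).toReal + 1, by positivity, ?_⟩
  intro u hu _ _
  set G : ℝ≥0∞ := ∫⁻ x in ball (0 : E) R, gradSSq n s u x with hG
  set U : ℝ≥0∞ := ∫⁻ x in ball (0 : E) R, ENNReal.ofReal (u x ^ 2) with hU
  set T : ℝ≥0∞ := ∫⁻ y in (ball (0 : E) r)ᶜ, ENNReal.ofReal (u y ^ 2 / ‖y‖ ^ t) with hT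
  -- pointwise claim
  have claim : ∀ x ∈ ball (0 : E) ρ,
      T ≤ A * gradSSq n s u x + ENNReal.ofReal (2 * u x ^ 2) * K := by
    intro x hx
    rw [mem_ball, dist_zero_right] at hx
    have key : ∀ y ∈ (ball (0 : E) r)ᶜ,
        ENNReal.ofReal (u y ^ 2 / ‖y‖ ^ t) ≤
          ENNReal.ofReal (2 ^ (t + 1) * ((u x - u y) ^ 2 / ‖x - y‖ ^ t)) +
          ENNReal.ofReal (2 * u x ^ 2 * (1 / ‖y‖ ^ t)) := by
      intro y hy
      rw [Set.mem_compl_iff, mem_ball, dist_zero_right, not_lt] at hy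
      have hypos : (0 : ℝ) < ‖y‖ := lt_of_lt_of_le hr hy
      have hxy : (0 : ℝ) < ‖x - y‖ := by
        have : ‖y‖ - ‖x‖ ≤ ‖y - x‖ := norm_sub_norm_le _ _
        rw [norm_sub_rev y x] at this
        have hxr : ‖x‖ < r := lt_of_lt_of_le hx (min_le_left _ _)
        linarith
      have hle : ‖x - y‖ ≤ 2 * ‖y‖ := by
        have h1 : ‖x - y‖ ≤ ‖x‖ + ‖y‖ := norm_sub_le _ _
        have hxr : ‖x‖ < r := lt_of_lt_of_le hx (min_le_left _ _)
        linarith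
      have hP : (0 : ℝ) < ‖y‖ ^ t := Real.rpow_pos_of_pos hypos _
      have hQ : (0 : ℝ) < ‖x - y‖ ^ t := Real.rpow_pos_of_pos hxy _
      have hPQ : ‖x - y‖ ^ t ≤ 2 ^ t * ‖y‖ ^ t := by
        rw [← Real.mul_rpow (by norm_num) hypos.le]
        exact Real.rpow_le_rpow (norm_nonneg _) hle htpos.le
      rw [← ENNReal.ofReal_add (by positivity) (by positivity)]
      apply ENNReal.ofReal_le_ofReal
      have h1 : u y ^ 2 / ‖y‖ ^ t ≤ (2 * (u x - u y) ^ 2 + 2 * u x ^ 2) / ‖y‖ ^ t := by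
        apply div_le_div_of_nonneg_right ?_ hP.le |>.trans_eq rfl
        nlinarith [sq_nonneg (u x - u y), sq_nonneg (u x + u y), sq_nonneg (2*u x - u y)]
      have h3 : (u x - u y) ^ 2 / ‖y‖ ^ t ≤ 2 ^ t * ((u x - u y) ^ 2 / ‖x - y‖ ^ t) := by
        rw [mul_div_assoc', div_le_div_iff₀ hP hQ]
        nlinarith [sq_nonneg (u x - u y)]
      have h2t : (2:ℝ) ^ (t + 1) = 2 ^ t * 2 := by
        rw [Real.rpow_add (by norm_num), Real.rpow_one]
      calc u y ^ 2 / ‖y‖ ^ t ≤ (2 * (u x - u y) ^ 2 + 2 * u x ^ 2) / ‖y‖ ^ t := h1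
        _ = 2 * ((u x - u y) ^ 2 / ‖y‖ ^ t) + 2 * u x ^ 2 * (1 / ‖y‖ ^ t) := by ring
        _ ≤ 2 * (2 ^ t * ((u x - u y) ^ 2 / ‖x - y‖ ^ t)) + 2 * u x ^ 2 * (1 / ‖y‖ ^ t) := by
            have := mul_le_mul_of_nonneg_left h3 (by norm_num : (0:ℝ) ≤ 2)
            linarith
        _ = 2 ^ (t + 1) * ((u x - u y) ^ 2 / ‖x - y‖ ^ t) + 2 * u x ^ 2 * (1 / ‖y‖ ^ t) := by
            rw [h2t]; ring
    have hmeas1 : Measurable fun y : E =>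
        ENNReal.ofReal (2 ^ (t + 1) * ((u x - u y) ^ 2 / ‖x - y‖ ^ t)) := by
      apply ENNReal.measurable_ofReal.comp
      apply Measurable.mul measurable_const
      exact ((hu.const_sub _).pow_const 2).div
        ((measurable_const.sub measurable_id).norm.pow_const t)
    calc T ≤ ∫⁻ y in (ball (0 : E) r)ᶜ,
          (ENNReal.ofReal (2 ^ (t + 1) * ((u x - u y) ^ 2 / ‖x - y‖ ^ t)) +
           ENNReal.ofReal (2 * u x ^ 2 * (1 / ‖y‖ ^ t))) :=
          setLIntegral_mono' measurableSet_ball.compl key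
      _ = (∫⁻ y in (ball (0 : E) r)ᶜ,
            ENNReal.ofReal (2 ^ (t + 1) * ((u x - u y) ^ 2 / ‖x - y‖ ^ t))) +
          ∫⁻ y in (ball (0 : E) r)ᶜ, ENNReal.ofReal (2 * u x ^ 2 * (1 / ‖y‖ ^ t)) :=
          lintegral_add_left hmeas1 _
      _ ≤ A * gradSSq n s u x + ENNReal.ofReal (2 * u x ^ 2) * K := by
          apply add_le_add
          · calc (∫⁻ y in (ball (0 : E) r)ᶜ,
                ENNReal.ofReal (2 ^ (t + 1) * ((u x - u y) ^ 2 / ‖x - y‖ ^ t)))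
                ≤ ∫⁻ y, ENNReal.ofReal (2 ^ (t + 1) * ((u x - u y) ^ 2 / ‖x - y‖ ^ t)) :=
                  setLIntegral_le_lintegral _ _
              _ = A * gradSSq n s u x := by
                  rw [hA, gradSSq]
                  simp_rw [ENNReal.ofReal_mul (by positivity : (0:ℝ) ≤ 2 ^ (t+1))]
                  exact lintegral_const_mul' _ _ ENNReal.ofReal_ne_top
          · rw [hKdef]
            simp_rw [ENNReal.ofReal_mul (by positivity : (0:ℝ) ≤ 2 * u x ^ 2)]
            exact le_of_eq (lintegral_const_mul' _ _ ENNReal.ofReal_ne_top)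
  -- measurability of gradSSq
  have hgmeas : Measurable (gradSSq n s u) := by
    apply Measurable.lintegral_prod_right' (f := fun p : E × E =>
      ENNReal.ofReal ((u p.1 - u p.2) ^ 2 / ‖p.1 - p.2‖ ^ t))
    apply ENNReal.measurable_ofReal.comp
    exact (((hu.comp measurable_fst).sub (hu.comp measurable_snd)).pow_const 2).div
      ((measurable_fst.sub measurable_snd).norm.pow_const t)
  -- integrate the claim over the small ball
  have hmain : μρ * T ≤ M * (G + U) := by
    have h1 : μρ * T = ∫⁻ _ in ball (0 : E) ρ, T := by
      rw [setLIntegral_const, mul_comm]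
    rw [h1]
    calc (∫⁻ x in ball (0 : E) ρ, T)
        ≤ ∫⁻ x in ball (0 : E) ρ,
            (A * gradSSq n s u x + ENNReal.ofReal (2 * u x ^ 2) * K) :=
          setLIntegral_mono' measurableSet_ball claim
      _ = (∫⁻ x in ball (0 : E) ρ, A * gradSSq n s u x) +
            ∫⁻ x in ball (0 : E) ρ, ENNReal.ofReal (2 * u x ^ 2) * K :=
          lintegral_add_left (hgmeas.const_mul A) _
      _ ≤ A * G + 2 * K * U := by
          apply add_le_add
          · rw [lintegral_const_mul' _ _ ENNReal.ofReal_ne_top]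
            apply mul_le_mul_right
            exact lintegral_mono_set (ball_subset_ball (min_le_right _ _))
          · rw [lintegral_mul_const' _ _ hK.ne]
            have : (∫⁻ x in ball (0 : E) ρ, ENNReal.ofReal (2 * u x ^ 2)) ≤ 2 * U := by
              calc (∫⁻ x in ball (0 : E) ρ, ENNReal.ofReal (2 * u x ^ 2))
                  = 2 * ∫⁻ x in ball (0 : E) ρ, ENNReal.ofReal (u x ^ 2) := by
                    simp_rw [ENNReal.ofReal_mul (by norm_num : (0:ℝ) ≤ 2),
                      ENNReal.ofReal_ofNat]
                    exact lintegral_const_mul' _ _ (by norm_num)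
                _ ≤ 2 * U := by
                    apply mul_le_mul_right
                    exact lintegral_mono_set (ball_subset_ball (min_le_right _ _))
            calc (∫⁻ x in ball (0 : E) ρ, ENNReal.ofReal (2 * u x ^ 2)) * K
                ≤ 2 * U * K := mul_le_mul_left this _
              _ = 2 * K * U := by ring
      _ ≤ M * (G + U) := by
          rw [hM, add_mul]
          exact add_le_add (mul_le_mul_right le_self_add _)
            (mul_le_mul_right le_add_self _)
  have hdiv : T ≤ M / μρ * (G + U) := by
    rw [ENNReal.div_eq_inv_mul, mul_assoc, ← ENNReal.div_eq_inv_mul]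
    rw [ENNReal.le_div_iff_mul_le (Or.inl hμ0) (Or.inl hμtop), mul_comm]
    exact hmain
  refine hdiv.trans (mul_le_mul_left ?_ _)
  calc M / μρ = ENNReal.ofReal (M / μρ).toReal := (ENNReal.ofReal_toReal hMdiv).symm
    _ ≤ ENNReal.ofReal ((M / μρ).toReal + 1) := ENNReal.ofReal_le_ofReal (by linarith)
end
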